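/- arXiv:1509.00187 — 3 statements merged into one kernel-verified Lean document; each statement's English description precedes it below -/
import Mathlib

section
/- Let n ≥ 3, let K be a field with char(K) ≠ 2, and let ρ̃ : SL_n(ℤ_2) → SL_d(K) be a group homomorphism. If d < n, then ρ̃ is trivial, i.e. ρ̃(A) is the identity matrix for every A ∈ SL_n(ℤ_2). -/
set_option linter.unusedSectionVars false
set_option maxHeartbeats 1000000
namespace SLtriv

section CardLemma
open Module

lemma exp_two_comm {G : Type*} [Group G] (h2 : ∀ a : G, a * a = 1) (a b : G) :
    a * b = b * a := by
  have hinv : ∀ x : G, x⁻¹ = x := fun x => by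
    rw [← mul_eq_one_iff_inv_eq]; exact h2 x
  calc a * b = (a * b)⁻¹ := (hinv _).symm
    _ = b⁻¹ * a⁻¹ := mul_inv_rev a b
    _ = b * a := by rw [hinv, hinv]

universe v w

lemma card_range_le_aux {K : Type*} [Field K] (hK : (2 : K) ≠ 0) (N : ℕ) :
    ∀ (V : Type v) [AddCommGroup V] [Module K V] [FiniteDimensional K V]
      (G : Type w) [Group G] [Finite G] (f : G →* Module.End K V),
      finrank K V ≤ N → (∀ a : G, a * a = 1) →
      Nat.card (Set.range ⇑f) ≤ 2 ^ finrank K V := by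
  induction N with
  | zero =>
    intro V _ _ _ G _ _ f hrank h2
    have h0 : finrank K V = 0 := Nat.le_zero.mp hrank
    haveI : Subsingleton V := (Module.finrank_zero_iff (R := K)).mp h0
    have hsub : Set.range ⇑f ⊆ {1} := by
      rintro x ⟨a, rfl⟩
      simp [Subsingleton.elim (f a) 1]
    calc Nat.card (Set.range ⇑f) = (Set.range ⇑f).ncard := (Nat.card_coe_set_eq _)
      _ ≤ ({1} : Set (Module.End K V)).ncard :=
          Set.ncard_le_ncard hsub (Set.finite_singleton _)
      _ = 1 := Set.ncard_singleton _
      _ ≤ 2 ^ finrank K V := Nat.one_le_two_pow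
  | succ N IH =>
    intro V _ _ _ G _ _ f hrank h2
    rcases Nat.eq_zero_or_pos (finrank K V) with h0 | hpos
    · haveI : Subsingleton V := (Module.finrank_zero_iff (R := K)).mp h0
      have hsub : Set.range ⇑f ⊆ {1} := by
        rintro x ⟨a, rfl⟩
        simp [Subsingleton.elim (f a) 1]
      calc Nat.card (Set.range ⇑f) = (Set.range ⇑f).ncard := (Nat.card_coe_set_eq _)
        _ ≤ ({1} : Set (Module.End K V)).ncard :=
            Set.ncard_le_ncard hsub (Set.finite_singleton _)
        _ = 1 := Set.ncard_singleton _
        _ ≤ 2 ^ finrank K V := Nat.one_le_two_pow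
    by_cases hsc : ∀ a : G, f a = 1 ∨ f a = -1
    · have hsub : Set.range ⇑f ⊆ {1, -1} := by
        rintro x ⟨a, rfl⟩
        rcases hsc a with h | h <;> simp [h]
      calc Nat.card (Set.range ⇑f) = (Set.range ⇑f).ncard := (Nat.card_coe_set_eq _)
        _ ≤ ({1, -1} : Set (Module.End K V)).ncard :=
            Set.ncard_le_ncard hsub (Set.toFinite _)
        _ ≤ ({-1} : Set (Module.End K V)).ncard + 1 := Set.ncard_insert_le _ _
        _ ≤ 2 := by rw [Set.ncard_singleton]
        _ ≤ 2 ^ finrank K V := by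
            calc (2 : ℕ) = 2 ^ 1 := (pow_one 2).symm
              _ ≤ 2 ^ finrank K V := Nat.pow_le_pow_right (by norm_num) hpos
    · push_neg at hsc
      obtain ⟨a₀, ha1, ha2⟩ := hsc
      set u : Module.End K V := f a₀ with hu
      have hu2 : u * u = 1 := by rw [hu, ← map_mul, h2 a₀, map_one]
      have huu : ∀ y, u (u y) = y := fun y => by
        have := congrArg (fun g : Module.End K V => g y) hu2
        simpa [Module.End.mul_apply] using this
      set p := LinearMap.ker (u - 1) with hp
      set q := LinearMap.ker (u + 1) with hq
      have hup : ∀ x, x ∈ p ↔ u x = x := fun x => by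
        simp [hp, LinearMap.mem_ker, LinearMap.sub_apply, sub_eq_zero]
      have huq : ∀ x, x ∈ q ↔ u x = -x := fun x => by
        simp [hq, LinearMap.mem_ker, LinearMap.add_apply, add_eq_zero_iff_eq_neg]
      have hcompl : IsCompl p q := by
        constructor
        · rw [Submodule.disjoint_def]
          intro x hxp hxq
          have h1 : u x = x := (hup x).1 hxp
          have h2' : u x = -x := (huq x).1 hxq
          have hx : x = -x := h1.symm.trans h2'
          have h2x : (2 : K) • x = 0 := by
            rw [two_smul]
            nth_rewrite 2 [hx]
            exact add_neg_cancel x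
          rcases smul_eq_zero.mp h2x with hc | hc
          · exact absurd hc hK
          · exact hc
        · rw [codisjoint_iff, Submodule.eq_top_iff']
          intro x
          have hx : x = (2 : K)⁻¹ • (x + u x) + (2 : K)⁻¹ • (x - u x) := by
            have hsum : (x + u x) + (x - u x) = (2 : K) • x := by
              rw [two_smul]; abel
            rw [← smul_add, hsum, smul_smul, inv_mul_cancel₀ hK, one_smul]
          rw [hx]
          apply Submodule.add_mem_sup
          · rw [hup, map_smul, map_add, huu]
            rw [add_comm (u x) x]
          · rw [huq, map_smul, map_sub, huu, ← smul_neg, neg_sub]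
      have hpne : p ≠ ⊤ := by
        intro hc
        apply ha1
        have h0 : u - 1 = 0 := LinearMap.ker_eq_top.mp (hp ▸ hc)
        rw [hu] at h0 ⊢
        exact sub_eq_zero.mp h0
      have hqne : q ≠ ⊤ := by
        intro hc
        apply ha2
        have h0 : u + 1 = 0 := LinearMap.ker_eq_top.mp (hq ▸ hc)
        rw [hu] at h0 ⊢
        exact eq_neg_of_add_eq_zero_left h0
      have hcom : ∀ a : G, u * f a = f a * u := fun a => by
        rw [hu, ← map_mul, ← map_mul, exp_two_comm h2]
      have hmapsp : ∀ a : G, ∀ x ∈ p, f a x ∈ p := by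
        intro a x hx
        rw [hup] at hx ⊢
        calc u (f a x) = (u * f a) x := (Module.End.mul_apply _ _ _).symm
          _ = (f a * u) x := by rw [hcom]
          _ = f a (u x) := Module.End.mul_apply _ _ _
          _ = f a x := by rw [hx]
      have hmapsq : ∀ a : G, ∀ x ∈ q, f a x ∈ q := by
        intro a x hx
        rw [huq] at hx ⊢
        calc u (f a x) = (u * f a) x := (Module.End.mul_apply _ _ _).symm
          _ = (f a * u) x := by rw [hcom]
          _ = f a (u x) := Module.End.mul_apply _ _ _
          _ = -(f a x) := by rw [hx, map_neg]
      let fp : G →* Module.End K p :=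
        { toFun := fun a => (f a).restrict (hmapsp a)
          map_one' := LinearMap.ext fun x => Subtype.ext (by
            simp [LinearMap.restrict_coe_apply])
          map_mul' := fun a b => LinearMap.ext fun x => Subtype.ext (by
            simp [LinearMap.restrict_coe_apply, Module.End.mul_apply]) }
      let fq : G →* Module.End K q :=
        { toFun := fun a => (f a).restrict (hmapsq a)
          map_one' := LinearMap.ext fun x => Subtype.ext (by
            simp [LinearMap.restrict_coe_apply])
          map_mul' := fun a b => LinearMap.ext fun x => Subtype.ext (by
            simp [LinearMap.restrict_coe_apply, Module.End.mul_apply]) }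
      have hplt : finrank K p < finrank K V := Submodule.finrank_lt hpne
      have hqlt : finrank K q < finrank K V := Submodule.finrank_lt hqne
      have hcp := IH p G fp (by omega) h2
      have hcq := IH q G fq (by omega) h2
      haveI : Finite ↥(Set.range ⇑fp) := (Set.finite_range _).to_subtype
      haveI : Finite ↥(Set.range ⇑fq) := (Set.finite_range _).to_subtype
      set Φ : ↥(Set.range ⇑f) → ↥(Set.range ⇑fp) × ↥(Set.range ⇑fq) := fun y =>
        (⟨fp (Classical.choose y.2), Set.mem_range_self _⟩,
         ⟨fq (Classical.choose y.2), Set.mem_range_self _⟩) with hΦdef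
      have hΦ : Function.Injective Φ := by
        intro y₁ y₂ hy
        have e₁ : f (Classical.choose y₁.2) = y₁.val := Classical.choose_spec y₁.2
        have e₂ : f (Classical.choose y₂.2) = y₂.val := Classical.choose_spec y₂.2
        have h1 : fp (Classical.choose y₁.2) = fp (Classical.choose y₂.2) := by
          have := congrArg Prod.fst hy
          simpa [hΦdef, Subtype.ext_iff] using this
        have hq1 : fq (Classical.choose y₁.2) = fq (Classical.choose y₂.2) := by
          have := congrArg Prod.snd hy
          simpa [hΦdef, Subtype.ext_iff] using this
        apply Subtype.ext
        rw [← e₁, ← e₂]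
        apply LinearMap.ext
        intro x
        obtain ⟨y, z, hyp, hzq, hyz⟩ :=
          Submodule.codisjoint_iff_exists_add_eq.mp hcompl.codisjoint x
        rw [← hyz, map_add, map_add]
        congr 1
        · have := congrArg (fun g : Module.End K p => (g ⟨y, hyp⟩ : V)) h1
          simpa [fp, LinearMap.restrict_coe_apply] using this
        · have := congrArg (fun g : Module.End K q => (g ⟨z, hzq⟩ : V)) hq1
          simpa [fq, LinearMap.restrict_coe_apply] using this
      calc Nat.card ↥(Set.range ⇑f)
          ≤ Nat.card (↥(Set.range ⇑fp) × ↥(Set.range ⇑fq)) :=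
            Nat.card_le_card_of_injective Φ hΦ
        _ = Nat.card ↥(Set.range ⇑fp) * Nat.card ↥(Set.range ⇑fq) := Nat.card_prod _ _
        _ ≤ 2 ^ finrank K p * 2 ^ finrank K q := Nat.mul_le_mul hcp hcq
        _ = 2 ^ (finrank K p + finrank K q) := (pow_add 2 _ _).symm
        _ = 2 ^ finrank K V := by rw [Submodule.finrank_add_eq_of_isCompl hcompl]


end CardLemma

open Matrix
variable {m : Type*} [Fintype m] [DecidableEq m] {R : Type*} [CommRing R]

lemma vmv_mul_vmv (v w v' w' : m → R) :
    vecMulVec v w * vecMulVec v' w' = (w ⬝ᵥ v') • vecMulVec v w' := by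
  ext i j
  simp only [mul_apply, vecMulVec_apply, Matrix.smul_apply, dotProduct, smul_eq_mul,
    Finset.sum_mul, Finset.mul_sum]
  exact Finset.sum_congr rfl fun k _ => by ring

lemma det_one_add_vmv (v w : m → R) (h : w ⬝ᵥ v = 0) :
    (1 + vecMulVec v w).det = 1 := by
  rw [vecMulVec_eq Unit, det_one_add_replicateCol_mul_replicateRow, h, add_zero]

lemma one_add_vmv_mul (v w v' w' : m → R) (h : w ⬝ᵥ v' = 0) :
    (1 + vecMulVec v w) * (1 + vecMulVec v' w') =
      1 + (vecMulVec v w + vecMulVec v' w') := by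
  rw [mul_add, add_mul, add_mul, mul_one, one_mul, vmv_mul_vmv, h, zero_smul, add_zero,
    mul_one, add_assoc]

lemma vmv_add_left (v v' w : m → R) :
    vecMulVec (v + v') w = vecMulVec v w + vecMulVec v' w := by
  ext i j; simp [vecMulVec_apply, add_mul]

lemma vmv_add_right (v w w' : m → R) :
    vecMulVec v (w + w') = vecMulVec v w + vecMulVec v w' := by
  ext i j; simp [vecMulVec_apply, mul_add]

lemma mul_vmv (g : Matrix m m R) (v w : m → R) :
    g * vecMulVec v w = vecMulVec (g *ᵥ v) w := by
  ext i j
  simp only [mul_apply, vecMulVec_apply, mulVec, dotProduct, Finset.sum_mul]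
  exact Finset.sum_congr rfl fun k _ => by ring

lemma vmv_mul (g : Matrix m m R) (v w : m → R) :
    vecMulVec v w * g = vecMulVec v (w ᵥ* g) := by
  ext i j
  simp only [mul_apply, vecMulVec_apply, vecMul, dotProduct, Finset.mul_sum]
  exact Finset.sum_congr rfl fun k _ => by ring

lemma vmv_mulVec (v w x : m → R) : vecMulVec v w *ᵥ x = (w ⬝ᵥ x) • v := by
  ext i
  simp only [mulVec, dotProduct, vecMulVec_apply, Pi.smul_apply, smul_eq_mul, Finset.mul_sum]
  rw [Finset.sum_mul]
  exact Finset.sum_congr rfl fun k _ => by ring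

lemma vecMul_vmv (v w x : m → R) : x ᵥ* vecMulVec v w = (x ⬝ᵥ v) • w := by
  ext j
  simp only [vecMul, dotProduct, vecMulVec_apply, Pi.smul_apply, smul_eq_mul]
  rw [Finset.sum_mul]
  exact Finset.sum_congr rfl fun k _ => by ring

lemma conj_eq (g : Matrix m m R) (v w v' w' : m → R) (h1 : g *ᵥ v = v')
    (h2 : w' ᵥ* g = w) :
    g * (1 + vecMulVec v w) = (1 + vecMulVec v' w') * g := by
  rw [mul_add, add_mul, mul_one, one_mul, mul_vmv, vmv_mul, h1, h2]

lemma permMatrix_mulVec (σ : Equiv.Perm m) (v : m → R) :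
    (σ.permMatrix R) *ᵥ v = v ∘ σ := by
  ext r
  simp only [mulVec, dotProduct, Equiv.Perm.permMatrix, PEquiv.toMatrix_toPEquiv_eq,
    submatrix_apply, id_eq, one_apply, Function.comp_apply]
  simp [Finset.sum_ite_eq]

lemma vecMul_permMatrix (σ : Equiv.Perm m) (w : m → R) :
    w ᵥ* (σ.permMatrix R) = w ∘ σ.symm := by
  ext c
  simp only [vecMul, dotProduct, Equiv.Perm.permMatrix, PEquiv.toMatrix_toPEquiv_eq,
    submatrix_apply, id_eq, one_apply, Function.comp_apply]
  rw [Finset.sum_eq_single (σ.symm c)] <;> simp +contextual [Equiv.eq_symm_apply]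

variable {nn : ℕ} [NeZero nn]

/-- transvection-like SL element over ZMod 2 -/
def Ee (v w : Fin nn → ZMod 2) (h : w ⬝ᵥ v = 0) :
    Matrix.SpecialLinearGroup (Fin nn) (ZMod 2) :=
  ⟨1 + vecMulVec v w, det_one_add_vmv v w h⟩

@[simp] lemma Ee_coe (v w : Fin nn → ZMod 2) (h : w ⬝ᵥ v = 0) :
    (Ee v w h : Matrix (Fin nn) (Fin nn) (ZMod 2)) = 1 + vecMulVec v w := rfl

/-- permutation SL element over ZMod 2 -/
def Pe (σ : Equiv.Perm (Fin nn)) : Matrix.SpecialLinearGroup (Fin nn) (ZMod 2) :=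
  ⟨σ.permMatrix (ZMod 2), by
    rw [det_permutation]
    rcases Int.units_eq_one_or (Equiv.Perm.sign σ) with h | h <;> rw [h] <;> decide⟩

@[simp] lemma Pe_coe (σ : Equiv.Perm (Fin nn)) :
    (Pe σ : Matrix (Fin nn) (Fin nn) (ZMod 2)) = σ.permMatrix (ZMod 2) := rfl

variable {H : Type*} [Group H]
  (ρ : Matrix.SpecialLinearGroup (Fin nn) (ZMod 2) →* H)

lemma conj_transfer {x y g : Matrix.SpecialLinearGroup (Fin nn) (ZMod 2)}
    (h : g.val * x.val = y.val * g.val) (hx : ρ x = 1) : ρ y = 1 := by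
  have hg : g * x = y * g := Subtype.ext (by simpa using h)
  have hy : y = g * x * g⁻¹ := by
    rw [hg]; group
  rw [hy, MonoidHom.map_mul, MonoidHom.map_mul, hx, mul_one, MonoidHom.map_inv, mul_inv_cancel]

lemma single_comp (σ : Equiv.Perm (Fin nn)) (i : Fin nn) :
    (Pi.single i (1 : ZMod 2)) ∘ σ = Pi.single (σ.symm i) (1 : ZMod 2) := by
  ext r
  simp only [Function.comp_apply, Pi.single_apply]
  exact if_congr (Equiv.apply_eq_iff_eq_symm_apply σ) rfl rfl

lemma comp_perm (w : Fin nn → ZMod 2) (σ : Equiv.Perm (Fin nn)) (hw : ∀ c, w (σ c) = w c) :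
    w ∘ σ = w := funext hw

/-- Step A: if `ρ` kills `1 + e₀ wᵀ` for some nonzero `w` with `w 0 = 0`, it kills
`1 + e₀ e_jᵀ` for every `j ≠ 0`. -/
lemma stepA {w : Fin nn → ZMod 2} (hw : w ≠ 0) (hw0 : w 0 = 0)
    (hvw : w ⬝ᵥ Pi.single 0 1 = 0)
    (hkill : ρ (Ee (Pi.single 0 1) w hvw) = 1) {j : Fin nn} (hj : j ≠ 0)
    (hvj : Pi.single j (1 : ZMod 2) ⬝ᵥ Pi.single 0 1 = 0) :
    ρ (Ee (Pi.single 0 1) (Pi.single j 1) hvj) = 1 := by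
  obtain ⟨mi, hmi⟩ : ∃ mi, w mi ≠ 0 := by
    by_contra hc
    push_neg at hc
    exact hw (funext fun c => hc c)
  have hm1 : w mi = 1 := by
    rcases (by decide : ∀ c : ZMod 2, c = 0 ∨ c = 1) (w mi) with h | h
    · exact absurd h hmi
    · exact h
  have hm0 : mi ≠ 0 := fun h => hmi (h ▸ hw0)
  set σ : Equiv.Perm (Fin nn) := Equiv.swap j mi with hσ
  have hBdet : (w + Pi.single mi 1) ⬝ᵥ (Pi.single mi (1 : ZMod 2)) = 0 := by
    rw [dotProduct_single, Pi.add_apply, hm1, Pi.single_eq_same, mul_one]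
    decide
  set g : Matrix.SpecialLinearGroup (Fin nn) (ZMod 2) :=
    Pe σ * Ee (Pi.single mi 1) (w + Pi.single mi 1) hBdet with hg
  apply conj_transfer ρ (g := g) _ hkill
  rw [Ee_coe, Ee_coe]
  apply conj_eq
  · -- g *ᵥ single 0 = single 0
    rw [hg, Matrix.SpecialLinearGroup.coe_mul, ← mulVec_mulVec, Ee_coe, Pe_coe]
    have hz : (w + Pi.single mi 1) ⬝ᵥ (Pi.single 0 1 : Fin nn → ZMod 2) = 0 := by
      rw [dotProduct_single, Pi.add_apply, hw0, Pi.single_eq_of_ne (Ne.symm hm0), zero_add,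
        zero_mul]
    rw [add_mulVec, one_mulVec, vmv_mulVec, hz, zero_smul, add_zero, permMatrix_mulVec,
      single_comp]
    rw [show σ.symm 0 = 0 by simp [hσ, Equiv.swap_apply_of_ne_of_ne (Ne.symm hj) (Ne.symm hm0)]]
  · -- single j ᵥ* g = w
    rw [hg, Matrix.SpecialLinearGroup.coe_mul, ← vecMul_vecMul, Pe_coe, Ee_coe]
    rw [vecMul_permMatrix, single_comp]
    have : σ.symm.symm j = mi := by simp [hσ]
    rw [this, vecMul_add, vecMul_one, vecMul_vmv, single_dotProduct, Pi.single_eq_same,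
      one_mul, one_smul]
    ext c
    simp only [Pi.add_apply, Pi.single_apply]
    rcases eq_or_ne c mi with rfl | hc
    · simp [hm1]; decide
    · simp [hc]

/-- Step B: kills all `1 + e_i e_kᵀ`. -/
lemma stepB (hA : ∀ (j : Fin nn), j ≠ 0 → ∀ (hvj : Pi.single j (1 : ZMod 2) ⬝ᵥ Pi.single 0 1 = 0),
      ρ (Ee (Pi.single 0 1) (Pi.single j 1) hvj) = 1)
    {i k : Fin nn} (hik : i ≠ k)
    (hvk : Pi.single k (1 : ZMod 2) ⬝ᵥ Pi.single i 1 = 0) :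
    ρ (Ee (Pi.single i 1) (Pi.single k 1) hvk) = 1 := by
  set σ : Equiv.Perm (Fin nn) := Equiv.swap i 0 with hσ
  set j : Fin nn := σ k with hj
  have hj0 : j ≠ 0 := by
    intro hc
    have h2 : k = i := by simpa [hj, hσ] using congrArg σ hc
    exact hik h2.symm
  have hvj : Pi.single j (1 : ZMod 2) ⬝ᵥ Pi.single 0 1 = 0 := by
    rw [dotProduct_single, Pi.single_eq_of_ne (Ne.symm hj0), zero_mul]
  apply conj_transfer ρ (g := Pe σ) _ (hA j hj0 hvj)
  rw [Ee_coe, Ee_coe, Pe_coe]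
  apply conj_eq
  · rw [permMatrix_mulVec, single_comp]
    simp [hσ]
  · rw [vecMul_permMatrix, single_comp]
    simp [hj]


def tEl (t : TransvectionStruct (Fin nn) (ZMod 2)) :
    Matrix.SpecialLinearGroup (Fin nn) (ZMod 2) := ⟨t.toMatrix, t.det⟩

@[simp] lemma tEl_coe (t : TransvectionStruct (Fin nn) (ZMod 2)) :
    (tEl t : Matrix (Fin nn) (Fin nn) (ZMod 2)) = t.toMatrix := rfl

def listEl (L : List (TransvectionStruct (Fin nn) (ZMod 2))) :
    Matrix.SpecialLinearGroup (Fin nn) (ZMod 2) :=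
  ⟨(L.map TransvectionStruct.toMatrix).prod, TransvectionStruct.det_toMatrix_prod L⟩

@[simp] lemma listEl_coe (L : List (TransvectionStruct (Fin nn) (ZMod 2))) :
    (listEl L : Matrix (Fin nn) (Fin nn) (ZMod 2)) =
      (L.map TransvectionStruct.toMatrix).prod := rfl

lemma kills_transvection_struct
    (hE : ∀ (i k : Fin nn) (_ : i ≠ k)
        (hvk : Pi.single k (1 : ZMod 2) ⬝ᵥ Pi.single i 1 = 0),
        ρ (Ee (Pi.single i 1) (Pi.single k 1) hvk) = 1)
    (t : TransvectionStruct (Fin nn) (ZMod 2)) :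
    ρ (tEl t) = 1 := by
  rcases (by decide : ∀ c : ZMod 2, c = 0 ∨ c = 1) t.c with hc | hc
  · have h1 : tEl t = 1 :=
      Subtype.ext (by
        simp [TransvectionStruct.toMatrix, Matrix.transvection, hc,
          Matrix.SpecialLinearGroup.coe_one])
    rw [h1, MonoidHom.map_one]
  · have hvk : Pi.single t.j (1 : ZMod 2) ⬝ᵥ Pi.single t.i 1 = 0 := by
      rw [dotProduct_single, Pi.single_eq_of_ne t.hij, zero_mul]
    have h1 : tEl t = Ee (Pi.single t.i 1) (Pi.single t.j 1) hvk := Subtype.ext (by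
      simp only [tEl_coe, Ee_coe, TransvectionStruct.toMatrix, Matrix.transvection, hc, one_smul]
      congr 1
      ext r c
      simp only [Matrix.single, of_apply, vecMulVec_apply, Pi.single_apply]
      by_cases h1 : r = t.i <;> by_cases h2 : c = t.j <;>
        simp [h1, h2, eq_comm])
    rw [h1]; exact hE _ _ t.hij hvk

lemma kills_transvection_list
    (hE : ∀ (i k : Fin nn) (_ : i ≠ k)
        (hvk : Pi.single k (1 : ZMod 2) ⬝ᵥ Pi.single i 1 = 0),
        ρ (Ee (Pi.single i 1) (Pi.single k 1) hvk) = 1)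
    (L : List (TransvectionStruct (Fin nn) (ZMod 2))) :
    ρ (listEl L) = 1 := by
  induction L with
  | nil =>
      have h1 : listEl ([] : List (TransvectionStruct (Fin nn) (ZMod 2))) = 1 :=
        Subtype.ext (by simp [Matrix.SpecialLinearGroup.coe_one])
      rw [h1, MonoidHom.map_one]
  | cons t L ih =>
      have hsplit : listEl (t :: L) = tEl t * listEl L :=
        Subtype.ext (by simp [Matrix.SpecialLinearGroup.coe_mul])
      rw [hsplit, MonoidHom.map_mul, ih, mul_one, kills_transvection_struct ρ hE]

/-- If `ρ` kills all elementary transvections, it is trivial. -/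
lemma kills_all
    (hE : ∀ (i k : Fin nn) (_ : i ≠ k)
        (hvk : Pi.single k (1 : ZMod 2) ⬝ᵥ Pi.single i 1 = 0),
        ρ (Ee (Pi.single i 1) (Pi.single k 1) hvk) = 1)
    (A : Matrix.SpecialLinearGroup (Fin nn) (ZMod 2)) : ρ A = 1 := by
  obtain ⟨L, L', D, h⟩ := Pivot.exists_list_transvec_mul_mul_list_transvec_eq_diagonal (A.val)
  have hdetD : diagonal D = (1 : Matrix (Fin nn) (Fin nn) (ZMod 2)) := by
    have hdet : (diagonal D).det = 1 := by
      rw [← h]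
      simp [A.2]
    rw [det_diagonal] at hdet
    have hD : ∀ i, D i = 1 := by
      intro i
      rcases (by decide : ∀ c : ZMod 2, c = 0 ∨ c = 1) (D i) with hc | hc
      · exfalso
        rw [Finset.prod_eq_zero (Finset.mem_univ i) hc] at hdet
        exact zero_ne_one hdet
      · exact hc
    rw [show D = fun _ => 1 from funext hD, diagonal_one]
  have hPQ : listEl L * A * listEl L' = 1 := Subtype.ext (by
    simp only [Matrix.SpecialLinearGroup.coe_mul, listEl_coe]
    rw [h, hdetD, Matrix.SpecialLinearGroup.coe_one])
  have hA : A = (listEl L)⁻¹ * (listEl L')⁻¹ := by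
    have h2 : A = (listEl L)⁻¹ * (listEl L * A * listEl L') * (listEl L')⁻¹ := by group
    rw [hPQ] at h2
    simpa using h2
  rw [hA, MonoidHom.map_mul, MonoidHom.map_inv, MonoidHom.map_inv,
    kills_transvection_list ρ hE, kills_transvection_list ρ hE, inv_one, mul_one]


-- ZMod 2 helpers

lemma z2_cases (x : ZMod 2) : x = 0 ∨ x = 1 := by revert x; decide

lemma z2_add_self (x : ZMod 2) : x + x = 0 := by revert x; decide

lemma z2_eq_of_add_eq_zero {x y : ZMod 2} (h : x + y = 0) : y = x := by
  revert h; revert x y; decide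

lemma w_add_self {nn : ℕ} (w : Fin nn → ZMod 2) : w + w = 0 := by
  funext c; exact z2_add_self (w c)

section EeAlg
variable {nn : ℕ} [NeZero nn]

lemma Ee_mul_same (v w w' : Fin nn → ZMod 2) (hw : w ⬝ᵥ v = 0) (hw' : w' ⬝ᵥ v = 0)
    (h'' : (w + w') ⬝ᵥ v = 0) :
    Ee v w hw * Ee v w' hw' = Ee v (w + w') h'' := by
  apply Subtype.ext
  rw [Matrix.SpecialLinearGroup.coe_mul, Ee_coe, Ee_coe, Ee_coe,
    one_add_vmv_mul v w v w' hw, vmv_add_right]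

lemma Ee_zero (v : Fin nn → ZMod 2) (h : (0 : Fin nn → ZMod 2) ⬝ᵥ v = 0) :
    Ee v 0 h = 1 := by
  apply Subtype.ext
  rw [Ee_coe, Matrix.SpecialLinearGroup.coe_one]
  have : vecMulVec v (0 : Fin nn → ZMod 2) = 0 := by
    ext i j; simp [vecMulVec_apply]
  rw [this, add_zero]

lemma Ee_sq (v w : Fin nn → ZMod 2) (hw : w ⬝ᵥ v = 0) :
    Ee v w hw * Ee v w hw = 1 := by
  rw [Ee_mul_same v w w hw hw (by rw [add_dotProduct, hw, add_zero])]
  have h0 : w + w = 0 := w_add_self w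
  have : Ee v (w + w) (by rw [add_dotProduct, hw, add_zero]) =
      Ee v 0 (by rw [zero_dotProduct]) := by
    apply Subtype.ext; rw [Ee_coe, Ee_coe, h0]
  rw [this, Ee_zero]

lemma Ee_comm (v w v' w' : Fin nn → ZMod 2) (hw : w ⬝ᵥ v = 0) (hw' : w' ⬝ᵥ v' = 0)
    (h1 : w ⬝ᵥ v' = 0) (h2 : w' ⬝ᵥ v = 0) :
    Ee v w hw * Ee v' w' hw' = Ee v' w' hw' * Ee v w hw := by
  apply Subtype.ext
  rw [Matrix.SpecialLinearGroup.coe_mul, Matrix.SpecialLinearGroup.coe_mul, Ee_coe, Ee_coe,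
    one_add_vmv_mul v w v' w' h1, one_add_vmv_mul v' w' v w h2, add_comm (vecMulVec v w)]

lemma Ee_mul_add_left (v v' s : Fin nn → ZMod 2) (hs : s ⬝ᵥ v = 0) (hs' : s ⬝ᵥ v' = 0)
    (h'' : s ⬝ᵥ (v + v') = 0) :
    Ee v s hs * Ee v' s hs' = Ee (v + v') s h'' := by
  apply Subtype.ext
  rw [Matrix.SpecialLinearGroup.coe_mul, Ee_coe, Ee_coe, Ee_coe,
    one_add_vmv_mul v s v' s hs', vmv_add_left]

variable {H : Type*} [Group H]
  (ρ : Matrix.SpecialLinearGroup (Fin nn) (ZMod 2) →* H)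

lemma conj_transfer' {x y g : Matrix.SpecialLinearGroup (Fin nn) (ZMod 2)}
    (h : g * x = y * g) (hx : ρ x = 1) : ρ y = 1 := by
  have hy : y = g * x * g⁻¹ := by rw [h]; group
  rw [hy, MonoidHom.map_mul, MonoidHom.map_mul, hx, mul_one, MonoidHom.map_inv, mul_inv_cancel]

lemma conj_Ee (g : Matrix.SpecialLinearGroup (Fin nn) (ZMod 2))
    (v w v' w' : Fin nn → ZMod 2) (hw : w ⬝ᵥ v = 0) (hw' : w' ⬝ᵥ v' = 0)
    (h1 : g.val *ᵥ v = v') (h2 : w' ᵥ* g.val = w) :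
    g * Ee v w hw = Ee v' w' hw' * g := by
  apply Subtype.ext
  rw [Matrix.SpecialLinearGroup.coe_mul, Matrix.SpecialLinearGroup.coe_mul, Ee_coe, Ee_coe]
  exact conj_eq g.val v w v' w' h1 h2

end EeAlg

/-- 2×2 involutions with determinant one are `±1`. -/
lemma sl2_involution {K : Type*} [Field K] (hK : (2 : K) ≠ 0)
    (u : Matrix (Fin 2) (Fin 2) K) (hu : u * u = 1) (hdet : u.det = 1) :
    u = 1 ∨ u = -1 := by
  have e00 : u 0 0 * u 0 0 + u 0 1 * u 1 0 = 1 := by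
    have := congrFun (congrFun hu 0) 0
    simpa [Matrix.mul_apply, Fin.sum_univ_two, Matrix.one_apply] using this
  have e01 : u 0 0 * u 0 1 + u 0 1 * u 1 1 = 0 := by
    have := congrFun (congrFun hu 0) 1
    simpa [Matrix.mul_apply, Fin.sum_univ_two, Matrix.one_apply] using this
  have e10 : u 1 0 * u 0 0 + u 1 1 * u 1 0 = 0 := by
    have := congrFun (congrFun hu 1) 0
    simpa [Matrix.mul_apply, Fin.sum_univ_two, Matrix.one_apply] using this
  have edet : u 0 0 * u 1 1 - u 0 1 * u 1 0 = 1 := by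
    simpa [Matrix.det_fin_two] using hdet
  have ht : u 0 0 * (u 0 0 + u 1 1) = 2 := by linear_combination e00 + edet
  have htne : u 0 0 + u 1 1 ≠ 0 := by
    intro h
    rw [h, mul_zero] at ht
    exact hK ht.symm
  have hb : u 0 1 = 0 := by
    have h : u 0 1 * (u 0 0 + u 1 1) = 0 := by linear_combination e01
    rcases mul_eq_zero.mp h with h | h
    · exact h
    · exact absurd h htne
  have hc : u 1 0 = 0 := by
    have h : u 1 0 * (u 0 0 + u 1 1) = 0 := by linear_combination e10
    rcases mul_eq_zero.mp h with h | h
    · exact h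
    · exact absurd h htne
  have ha2 : u 0 0 * u 0 0 = 1 := by linear_combination e00 - u 1 0 * hb
  have had : u 0 0 * u 1 1 = 1 := by linear_combination edet + u 1 0 * hb
  have hda : u 1 1 = u 0 0 := by
    calc u 1 1 = (u 0 0 * u 0 0) * u 1 1 := by rw [ha2, one_mul]
      _ = u 0 0 * (u 0 0 * u 1 1) := by ring
      _ = u 0 0 := by rw [had, mul_one]
  rcases mul_self_eq_one_iff.mp ha2 with h1 | h1
  · left
    rw [Matrix.eta_fin_two u, hb, hc, hda, h1]
    rw [show (1 : Matrix (Fin 2) (Fin 2) K) = !![1,0;0,1] from Matrix.one_fin_two]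
  · right
    rw [Matrix.eta_fin_two u, hb, hc, hda, h1]
    rw [show (1 : Matrix (Fin 2) (Fin 2) K) = !![1,0;0,1] from Matrix.one_fin_two]
    norm_num



section Norm
variable {nn : ℕ} [NeZero nn]

lemma Ee_congr (v : Fin nn → ZMod 2) {w w' : Fin nn → ZMod 2} (e : w = w')
    (h : w ⬝ᵥ v = 0) (h' : w' ⬝ᵥ v = 0) : Ee v w h = Ee v w' h' := by
  apply Subtype.ext; rw [Ee_coe, Ee_coe, e]

lemma dot_single_zero (w : Fin nn → ZMod 2) (a : Fin nn) (h : w a = 0) :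
    w ⬝ᵥ Pi.single a 1 = 0 := by
  rw [dotProduct_single, h, zero_mul]

lemma w_comp_swap (w : Fin nn → ZMod 2) (aa bb : Fin nn) (ha : w aa = 0) (hb : w bb = 0) :
    w ∘ (Equiv.swap aa bb) = w := by
  funext c
  rcases eq_or_ne c aa with rfl | hca
  · simp [Equiv.swap_apply_left, ha, hb]
  rcases eq_or_ne c bb with rfl | hcb
  · simp [Equiv.swap_apply_right, ha, hb]
  · simp [Equiv.swap_apply_of_ne_of_ne hca hcb]

variable {H : Type*} [Group H] (ρ : Matrix.SpecialLinearGroup (Fin nn) (ZMod 2) →* H)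

lemma norm_swap (aa bb : Fin nn) (w : Fin nn → ZMod 2) (hwa : w aa = 0) (hwb : w bb = 0)
    (h : ρ (Ee (Pi.single bb 1) w (dot_single_zero w bb hwb)) = 1) :
    ρ (Ee (Pi.single aa 1) w (dot_single_zero w aa hwa)) = 1 := by
  apply conj_transfer' ρ (g := Pe (Equiv.swap aa bb)) _ h
  apply conj_Ee
  · rw [Pe_coe, permMatrix_mulVec, single_comp]
    congr 1
    simp
  · rw [Pe_coe, vecMul_permMatrix, Equiv.symm_swap, w_comp_swap w aa bb hwa hwb]

lemma norm_add (aa bb : Fin nn) (hab : aa ≠ bb) (w : Fin nn → ZMod 2)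
    (hwa : w aa = 0) (hwb : w bb = 0)
    (hdsum : (w ⬝ᵥ (Pi.single aa 1 + Pi.single bb 1)) = 0)
    (h : ρ (Ee (Pi.single aa 1 + Pi.single bb 1) w hdsum) = 1) :
    ρ (Ee (Pi.single aa 1) w (dot_single_zero w aa hwa)) = 1 := by
  have hpf : (Pi.single aa (1 : ZMod 2)) ⬝ᵥ Pi.single bb 1 = 0 := by
    rw [dotProduct_single, Pi.single_eq_of_ne (Ne.symm hab), zero_mul]
  apply conj_transfer' ρ (g := Ee (Pi.single bb 1) (Pi.single aa 1) hpf) _ h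
  apply conj_Ee
  · rw [Ee_coe, add_mulVec, one_mulVec, vmv_mulVec]
    have hdd : (Pi.single aa (1 : ZMod 2)) ⬝ᵥ (Pi.single aa 1 + Pi.single bb 1) = 1 := by
      simp [single_dotProduct, Pi.single_eq_of_ne hab, Pi.single_eq_of_ne (Ne.symm hab)]
    rw [hdd, one_smul, add_assoc, w_add_self, add_zero]
  · rw [Ee_coe, vecMul_add, vecMul_one, vecMul_vmv, dotProduct_single, hwb, zero_mul,
      zero_smul, add_zero]

lemma split_pair (aa bb : Fin nn) (hab : aa ≠ bb) (w0 w1 : Fin nn → ZMod 2)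
    (hw00 : w0 aa = 0) (hw01 : w0 bb = 0) (hw10 : w1 aa = 0) (hw11 : w1 bb = 0)
    (hne : ¬(w0 = 0 ∧ w1 = 0))
    (h : ρ (Ee (Pi.single aa 1) w0 (dot_single_zero w0 aa hw00) *
      Ee (Pi.single bb 1) w1 (dot_single_zero w1 bb hw11)) = 1) :
    ∃ (w : Fin nn → ZMod 2) (hd : w ⬝ᵥ Pi.single aa 1 = 0), w ≠ 0 ∧ w aa = 0 ∧
      ρ (Ee (Pi.single aa 1) w hd) = 1 := by
  have hsum_dot : ∀ (x : Fin nn → ZMod 2), x aa = 0 → x bb = 0 →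
      x ⬝ᵥ (Pi.single aa 1 + Pi.single bb 1) = 0 := by
    intro x hx1 hx2
    rw [dotProduct_add, dot_single_zero x aa hx1, dot_single_zero x bb hx2, add_zero]
  by_cases h1 : w1 = 0
  · have he : Ee (Pi.single bb 1) w1 (dot_single_zero w1 bb hw11) = 1 := by
      rw [Ee_congr (Pi.single bb 1) h1 _ (by rw [zero_dotProduct]), Ee_zero]
    rw [he, mul_one] at h
    exact ⟨w0, dot_single_zero w0 aa hw00, fun hc => hne ⟨hc, h1⟩, hw00, h⟩
  by_cases h0 : w0 = 0
  · have he : Ee (Pi.single aa 1) w0 (dot_single_zero w0 aa hw00) = 1 := by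
      rw [Ee_congr (Pi.single aa 1) h0 _ (by rw [zero_dotProduct]), Ee_zero]
    rw [he, one_mul] at h
    exact ⟨w1, dot_single_zero w1 aa hw10, h1, hw10,
      norm_swap ρ aa bb w1 hw10 hw11 h⟩
  · set σ : Equiv.Perm (Fin nn) := Equiv.swap aa bb with hσ
    have c0 : Pe σ * Ee (Pi.single aa 1) w0 (dot_single_zero w0 aa hw00) =
        Ee (Pi.single bb 1) w0 (dot_single_zero w0 bb hw01) * Pe σ := by
      apply conj_Ee
      · rw [Pe_coe, permMatrix_mulVec, single_comp]
        congr 1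
        simp [hσ]
      · rw [Pe_coe, vecMul_permMatrix, hσ, Equiv.symm_swap, w_comp_swap w0 aa bb hw00 hw01]
    have c1 : Pe σ * Ee (Pi.single bb 1) w1 (dot_single_zero w1 bb hw11) =
        Ee (Pi.single aa 1) w1 (dot_single_zero w1 aa hw10) * Pe σ := by
      apply conj_Ee
      · rw [Pe_coe, permMatrix_mulVec, single_comp]
        congr 1
        simp [hσ]
      · rw [Pe_coe, vecMul_permMatrix, hσ, Equiv.symm_swap, w_comp_swap w1 aa bb hw10 hw11]
    have hY : Pe σ * (Ee (Pi.single aa 1) w0 (dot_single_zero w0 aa hw00) *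
        Ee (Pi.single bb 1) w1 (dot_single_zero w1 bb hw11)) =
        (Ee (Pi.single bb 1) w0 (dot_single_zero w0 bb hw01) *
          Ee (Pi.single aa 1) w1 (dot_single_zero w1 aa hw10)) * Pe σ := by
      rw [← mul_assoc, c0, mul_assoc, c1, ← mul_assoc]
    have hρY := conj_transfer' ρ hY h
    by_cases hs : w0 + w1 = 0
    · have hw10' : w1 = w0 := by
        funext c
        exact z2_eq_of_add_eq_zero (congrFun hs c)
      have hrw : Ee (Pi.single aa 1) w0 (dot_single_zero w0 aa hw00) *
          Ee (Pi.single bb 1) w1 (dot_single_zero w1 bb hw11) =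
          Ee (Pi.single aa 1 + Pi.single bb 1) w0 (hsum_dot w0 hw00 hw01) := by
        rw [Ee_congr (Pi.single bb 1) hw10' _ (dot_single_zero w0 bb hw01)]
        exact Ee_mul_add_left _ _ _ _ _ _
      rw [hrw] at h
      exact ⟨w0, dot_single_zero w0 aa hw00, h0, hw00,
        norm_add ρ aa bb hab w0 hw00 hw01 _ h⟩
    · have hsa : (w0 + w1) aa = 0 := by rw [Pi.add_apply, hw00, hw10, add_zero]
      have hsb : (w0 + w1) bb = 0 := by rw [Pi.add_apply, hw01, hw11, add_zero]
      have hXY : ρ ((Ee (Pi.single aa 1) w0 (dot_single_zero w0 aa hw00) *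
          Ee (Pi.single bb 1) w1 (dot_single_zero w1 bb hw11)) *
          (Ee (Pi.single bb 1) w0 (dot_single_zero w0 bb hw01) *
            Ee (Pi.single aa 1) w1 (dot_single_zero w1 aa hw10))) = 1 := by
        rw [MonoidHom.map_mul, h, hρY, one_mul]
      have hsba : (w1 + w0) aa = 0 := by rw [Pi.add_apply, hw00, hw10, add_zero]
      have hsbb : (w1 + w0) bb = 0 := by rw [Pi.add_apply, hw01, hw11, add_zero]
      have hrw : (Ee (Pi.single aa 1) w0 (dot_single_zero w0 aa hw00) *
          Ee (Pi.single bb 1) w1 (dot_single_zero w1 bb hw11)) *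
          (Ee (Pi.single bb 1) w0 (dot_single_zero w0 bb hw01) *
            Ee (Pi.single aa 1) w1 (dot_single_zero w1 aa hw10)) =
          Ee (Pi.single aa 1 + Pi.single bb 1) (w0 + w1) (hsum_dot _ hsa hsb) := by
        have step1 : (Ee (Pi.single aa 1) w0 (dot_single_zero w0 aa hw00) *
            Ee (Pi.single bb 1) w1 (dot_single_zero w1 bb hw11)) *
            (Ee (Pi.single bb 1) w0 (dot_single_zero w0 bb hw01) *
              Ee (Pi.single aa 1) w1 (dot_single_zero w1 aa hw10)) =
            Ee (Pi.single aa 1) w0 (dot_single_zero w0 aa hw00) *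
            ((Ee (Pi.single bb 1) w1 (dot_single_zero w1 bb hw11) *
              Ee (Pi.single bb 1) w0 (dot_single_zero w0 bb hw01)) *
              Ee (Pi.single aa 1) w1 (dot_single_zero w1 aa hw10)) := by
          group
        rw [step1,
          Ee_mul_same (Pi.single bb 1) w1 w0 (dot_single_zero w1 bb hw11)
            (dot_single_zero w0 bb hw01) (dot_single_zero _ bb hsbb),
          Ee_comm (Pi.single bb 1) (w1 + w0) (Pi.single aa 1) w1
            (dot_single_zero _ bb hsbb) (dot_single_zero w1 aa hw10)
            (dot_single_zero _ aa hsba) (dot_single_zero w1 bb hw11),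
          ← mul_assoc,
          Ee_mul_same (Pi.single aa 1) w0 w1 (dot_single_zero w0 aa hw00)
            (dot_single_zero w1 aa hw10) (dot_single_zero _ aa hsa),
          Ee_congr (Pi.single bb 1) (add_comm w1 w0) (dot_single_zero _ bb hsbb)
            (dot_single_zero _ bb hsb),
          Ee_mul_add_left (Pi.single aa 1) (Pi.single bb 1) (w0 + w1)
            (dot_single_zero _ aa hsa) (dot_single_zero _ bb hsb) (hsum_dot _ hsa hsb)]
      rw [hrw] at hXY
      refine ⟨w0 + w1, dot_single_zero _ aa hsa, hs, hsa,
        norm_add ρ aa bb hab (w0 + w1) hsa hsb _ hXY⟩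

end Norm

end SLtriv

open SLtriv Matrix

/-- For `n ≥ 3`, a field `K` with `char K ≠ 2` and `d < n`, every
homomorphism `SL_n(ℤ₂) → SL_d(K)` is trivial. -/
theorem SL_mod2_rep_trivial {n d : ℕ} (hn : 3 ≤ n) {K : Type*} [Field K]
    (hK : ringChar K ≠ 2) (hd : d < n)
    (ρ : Matrix.SpecialLinearGroup (Fin n) (ZMod 2) →*
      Matrix.SpecialLinearGroup (Fin d) K) :
    ∀ A : Matrix.SpecialLinearGroup (Fin n) (ZMod 2), ρ A = 1 := by
  classical
  haveI : NeZero n := ⟨by omega⟩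
  have h2K : (2 : K) ≠ 0 := by
    intro h
    have hdvd : ringChar K ∣ 2 := ringChar.dvd (by exact_mod_cast h)
    rcases (Nat.dvd_prime Nat.prime_two).mp hdvd with h1 | h1
    · exact CharP.ringChar_ne_one h1
    · exact hK h1
  set i1 : Fin n := ⟨1, by omega⟩ with hi1
  set i2 : Fin n := ⟨2, by omega⟩ with hi2
  have hi10 : i1 ≠ 0 := by
    intro hc; have := congrArg Fin.val hc; simp [hi1] at this
  have hi20 : i2 ≠ 0 := by
    intro hc; have := congrArg Fin.val hc; simp [hi2] at this
  have hi12 : i1 ≠ i2 := by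
    intro hc; have := congrArg Fin.val hc; simp [hi1, hi2] at this
  obtain ⟨w, hdot, hwne, hw0, hkill⟩ :
      ∃ (w : Fin n → ZMod 2) (hdot : w ⬝ᵥ Pi.single 0 1 = 0), w ≠ 0 ∧ w 0 = 0 ∧
        ρ (Ee (Pi.single 0 1) w hdot) = 1 := by
    have hsw1 : (Pi.single i1 1 : Fin n → ZMod 2) (0 : Fin n) = 0 := by
      rw [Pi.single_eq_of_ne (Ne.symm hi10)]
    have hsw2 : (Pi.single i2 1 : Fin n → ZMod 2) (0 : Fin n) = 0 := by
      rw [Pi.single_eq_of_ne (Ne.symm hi20)]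
    have hsne1 : (Pi.single i1 1 : Fin n → ZMod 2) ≠ 0 := by
      intro hc
      have := congrFun hc i1
      rw [Pi.single_eq_same] at this
      exact one_ne_zero this
    rcases le_or_gt d 1 with hd1 | hd1
    · -- `SL_d` is trivial for `d ≤ 1`
      have htriv : ∀ x : Matrix.SpecialLinearGroup (Fin d) K, x = 1 := by
        intro x
        apply Subtype.ext
        rw [Matrix.SpecialLinearGroup.coe_one]
        interval_cases d
        · ext i j; exact i.elim0
        · have hdet := x.2
          rw [Matrix.det_fin_one] at hdet
          ext i j
          fin_cases i <;> fin_cases j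
          simpa [Matrix.one_apply] using hdet
      exact ⟨Pi.single i1 1, dot_single_zero _ _ hsw1, hsne1, hsw1, htriv _⟩
    rcases eq_or_ne d 2 with hd2 | hd2
    · -- d = 2 : involutions in SL₂ are ±1
      subst hd2
      set x := Ee (Pi.single (0 : Fin n) 1) (Pi.single i1 1) (dot_single_zero _ _ hsw1) with hx
      set y := Ee (Pi.single (0 : Fin n) 1) (Pi.single i2 1) (dot_single_zero _ _ hsw2) with hy
      have hvalx : (ρ x).val * (ρ x).val = 1 := by
        have h1 : ρ x * ρ x = 1 := by
          rw [← MonoidHom.map_mul, hx, Ee_sq, MonoidHom.map_one]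
        rw [← Matrix.SpecialLinearGroup.coe_mul, h1, Matrix.SpecialLinearGroup.coe_one]
      have hvaly : (ρ y).val * (ρ y).val = 1 := by
        have h1 : ρ y * ρ y = 1 := by
          rw [← MonoidHom.map_mul, hy, Ee_sq, MonoidHom.map_one]
        rw [← Matrix.SpecialLinearGroup.coe_mul, h1, Matrix.SpecialLinearGroup.coe_one]
      rcases sl2_involution h2K _ hvalx (ρ x).2 with hX | hX
      · exact ⟨Pi.single i1 1, dot_single_zero _ _ hsw1, hsne1, hsw1,
          Subtype.ext (hX.trans (Matrix.SpecialLinearGroup.coe_one).symm)⟩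
      rcases sl2_involution h2K _ hvaly (ρ y).2 with hY | hY
      · refine ⟨Pi.single i2 1, dot_single_zero _ _ hsw2, ?_, hsw2,
          Subtype.ext (hY.trans (Matrix.SpecialLinearGroup.coe_one).symm)⟩
        intro hc
        have := congrFun hc i2
        rw [Pi.single_eq_same] at this
        exact one_ne_zero this
      · -- both `-1`
        have hxy : ρ (x * y) = 1 := by
          apply Subtype.ext
          rw [MonoidHom.map_mul, Matrix.SpecialLinearGroup.coe_mul, hX, hY,
            Matrix.SpecialLinearGroup.coe_one, neg_mul_neg, one_mul]
        have hsum0 : (Pi.single i1 1 + Pi.single i2 1 : Fin n → ZMod 2) (0 : Fin n) = 0 := by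
          rw [Pi.add_apply, hsw1, hsw2, add_zero]
        have hxyE : x * y = Ee (Pi.single (0 : Fin n) 1)
            (Pi.single i1 1 + Pi.single i2 1) (dot_single_zero _ _ hsum0) := by
          rw [hx, hy]
          exact Ee_mul_same _ _ _ _ _ _
        rw [hxyE] at hxy
        refine ⟨Pi.single i1 1 + Pi.single i2 1, dot_single_zero _ _ hsum0, ?_, hsum0, hxy⟩
        intro hc
        have := congrFun hc i1
        rw [Pi.add_apply, Pi.single_eq_same, Pi.single_eq_of_ne hi12, add_zero] at this
        exact one_ne_zero this
    · -- d ≥ 3 : use the rank `2(n-2)` elementary abelian 2-group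
      have hd3 : 3 ≤ d := by omega
      set m2 : ℕ := n - 2 with hm2
      set wv : (Fin 2 × Fin m2 → ZMod 2) → Fin 2 → Fin n → ZMod 2 :=
        fun b i c => if h : 2 ≤ c.val then b (i, ⟨c.val - 2, by omega⟩) else 0 with hwv
      have hwv0 : ∀ b i, wv b i 0 = 0 := by
        intro b i; simp [hwv]
      have hwv1 : ∀ b i, wv b i i1 = 0 := by
        intro b i; simp [hwv, hi1]
      have hwvadd : ∀ b b' i, wv (b + b') i = wv b i + wv b' i := by
        intro b b' i; funext c
        by_cases h : 2 ≤ c.val <;> simp [hwv, h]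
      have hwvzero : ∀ i, wv 0 i = 0 := by
        intro i; funext c
        by_cases h : 2 ≤ c.val <;> simp [hwv, h]
      have hwvemb : ∀ b i (k : Fin m2), wv b i ⟨k.val + 2, by have := k.isLt; omega⟩ = b (i, k) := by
        intro b i k
        have hk := k.isLt
        simp only [hwv]
        show (if h : 2 ≤ k.val + 2 then b (i, ⟨k.val + 2 - 2, by omega⟩) else 0) = b (i, k)
        rw [dif_pos (by omega)]
        have he : (⟨k.val + 2 - 2, by omega⟩ : Fin m2) = k := Fin.ext (by simp)
        rw [he]
      set Ψ : (Fin 2 × Fin m2 → ZMod 2) → Matrix.SpecialLinearGroup (Fin n) (ZMod 2) :=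
        fun b => Ee (Pi.single 0 1) (wv b 0) (dot_single_zero _ _ (hwv0 b 0)) *
          Ee (Pi.single i1 1) (wv b 1) (dot_single_zero _ _ (hwv1 b 1)) with hΨ
      have rearrange : ∀ (a b c d : Matrix.SpecialLinearGroup (Fin n) (ZMod 2)),
          b * c = c * b → (a * b) * (c * d) = (a * c) * (b * d) := by
        intro a b c d h
        rw [mul_assoc, ← mul_assoc b c d, h, mul_assoc c b d, ← mul_assoc]
      have hΨmul : ∀ a b, Ψ (a + b) = Ψ a * Ψ b := by
        intro a b
        have e0 : Ee (Pi.single 0 1) (wv (a + b) 0) (dot_single_zero _ _ (hwv0 _ 0)) =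
            Ee (Pi.single 0 1) (wv a 0) (dot_single_zero _ _ (hwv0 a 0)) *
            Ee (Pi.single 0 1) (wv b 0) (dot_single_zero _ _ (hwv0 b 0)) := by
          rw [Ee_congr (Pi.single 0 1) (hwvadd a b 0) (dot_single_zero _ _ (hwv0 _ 0))
            (dot_single_zero _ _ (by rw [Pi.add_apply, hwv0 a 0, hwv0 b 0, add_zero]))]
          exact (Ee_mul_same _ _ _ _ _ _).symm
        have e1 : Ee (Pi.single i1 1) (wv (a + b) 1) (dot_single_zero _ _ (hwv1 _ 1)) =
            Ee (Pi.single i1 1) (wv a 1) (dot_single_zero _ _ (hwv1 a 1)) *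
            Ee (Pi.single i1 1) (wv b 1) (dot_single_zero _ _ (hwv1 b 1)) := by
          rw [Ee_congr (Pi.single i1 1) (hwvadd a b 1) (dot_single_zero _ _ (hwv1 _ 1))
            (dot_single_zero _ _ (by rw [Pi.add_apply, hwv1 a 1, hwv1 b 1, add_zero]))]
          exact (Ee_mul_same _ _ _ _ _ _).symm
        have hcomm : Ee (Pi.single 0 1) (wv b 0) (dot_single_zero _ _ (hwv0 b 0)) *
            Ee (Pi.single i1 1) (wv a 1) (dot_single_zero _ _ (hwv1 a 1)) =
            Ee (Pi.single i1 1) (wv a 1) (dot_single_zero _ _ (hwv1 a 1)) *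
            Ee (Pi.single 0 1) (wv b 0) (dot_single_zero _ _ (hwv0 b 0)) :=
          Ee_comm _ _ _ _ _ _ (dot_single_zero _ _ (hwv1 b 0)) (dot_single_zero _ _ (hwv0 a 1))
        simp only [hΨ]
        rw [e0, e1]
        exact rearrange _ _ _ _ hcomm
      let χ : Multiplicative (Fin 2 × Fin m2 → ZMod 2) →* Module.End K (Fin d → K) :=
        { toFun := fun g => Matrix.mulVecLin ((ρ (Ψ (Multiplicative.toAdd g))).val)
          map_one' := by
            have h1 : Ψ (Multiplicative.toAdd
                (1 : Multiplicative (Fin 2 × Fin m2 → ZMod 2))) = 1 := by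
              show Ψ 0 = 1
              simp only [hΨ]
              rw [Ee_congr (Pi.single 0 1) (hwvzero 0) (dot_single_zero _ _ (hwv0 0 0))
                  (zero_dotProduct _),
                Ee_congr (Pi.single i1 1) (hwvzero 1) (dot_single_zero _ _ (hwv1 0 1))
                  (zero_dotProduct _), Ee_zero, Ee_zero, one_mul]
            show Matrix.mulVecLin ((ρ (Ψ (Multiplicative.toAdd
              (1 : Multiplicative (Fin 2 × Fin m2 → ZMod 2))))).val) = 1
            rw [h1, MonoidHom.map_one, Matrix.SpecialLinearGroup.coe_one,
              Matrix.mulVecLin_one]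
            rfl
          map_mul' := fun a b => by
            show Matrix.mulVecLin ((ρ (Ψ (Multiplicative.toAdd (a * b)))).val) = _
            have ht : Multiplicative.toAdd (a * b) =
              Multiplicative.toAdd a + Multiplicative.toAdd b := rfl
            rw [ht, hΨmul, MonoidHom.map_mul, Matrix.SpecialLinearGroup.coe_mul,
              Matrix.mulVecLin_mul]
            rfl }
      have hG2sq : ∀ a : Multiplicative (Fin 2 × Fin m2 → ZMod 2), a * a = 1 := by
        intro a
        apply Multiplicative.toAdd.injective
        show Multiplicative.toAdd (a * a) = Multiplicative.toAdd 1
        rw [toAdd_mul, toAdd_one]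
        funext c
        exact z2_add_self _
      have hfr : Module.finrank K (Fin d → K) = d := by
        rw [Module.finrank_pi, Fintype.card_fin]
      have hcard := card_range_le_aux h2K d (Fin d → K)
        (Multiplicative (Fin 2 × Fin m2 → ZMod 2)) χ (le_of_eq hfr) hG2sq
      rw [hfr] at hcard
      have hnotinj : ¬ Function.Injective ⇑χ := by
        intro hinj
        have h1 : Nat.card (Set.range ⇑χ) =
            Nat.card (Multiplicative (Fin 2 × Fin m2 → ZMod 2)) :=
          Nat.card_congr (Equiv.ofInjective _ hinj).symm
        rw [h1] at hcard
        have h2' : Nat.card (Multiplicative (Fin 2 × Fin m2 → ZMod 2)) = 2 ^ (2 * m2) := by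
          rw [Nat.card_eq_fintype_card]
          simp [Fintype.card_fun, ZMod.card, Fintype.card_prod, Fintype.card_fin]
        rw [h2'] at hcard
        have hle := (Nat.pow_le_pow_iff_right (by norm_num : 1 < 2)).mp hcard
        omega
      obtain ⟨a, b, hab, habne⟩ := Function.not_injective_iff.mp hnotinj
      have hg1 : a * b⁻¹ ≠ 1 := fun h => habne (by rwa [mul_inv_eq_one] at h)
      have hχg : χ (a * b⁻¹) = 1 := by
        have hbinv : χ b * χ b⁻¹ = 1 := by
          rw [← MonoidHom.map_mul, mul_inv_cancel, MonoidHom.map_one]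
        calc χ (a * b⁻¹) = χ a * χ b⁻¹ := MonoidHom.map_mul χ a b⁻¹
          _ = χ b * χ b⁻¹ := by rw [hab]
          _ = 1 := hbinv
      set g0 := Multiplicative.toAdd (a * b⁻¹) with hg0
      have hmat : ((ρ (Ψ g0)).val) = 1 := by
        apply Matrix.toLin'.injective
        rw [Matrix.toLin'_apply', Matrix.toLin'_apply', Matrix.mulVecLin_one]
        exact hχg
      have hρΨ : ρ (Ψ g0) = 1 :=
        Subtype.ext (hmat.trans (Matrix.SpecialLinearGroup.coe_one).symm)
      have hg0ne : g0 ≠ 0 := by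
        intro h
        apply hg1
        apply Multiplicative.toAdd.injective
        rw [toAdd_one]
        exact h
      have hnboth : ¬ (wv g0 0 = 0 ∧ wv g0 1 = 0) := by
        rintro ⟨h0, h1⟩
        apply hg0ne
        funext pr
        simp only [Pi.zero_apply]
        rcases pr with ⟨i, k⟩
        fin_cases i
        · show g0 (0, k) = 0
          rw [← hwvemb g0 0 k, h0, Pi.zero_apply]
        · show g0 (1, k) = 0
          rw [← hwvemb g0 1 k, h1, Pi.zero_apply]
      have hρΨ' : ρ (Ee (Pi.single 0 1) (wv g0 0) (dot_single_zero _ _ (hwv0 g0 0)) *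
          Ee (Pi.single i1 1) (wv g0 1) (dot_single_zero _ _ (hwv1 g0 1))) = 1 := by
        have h' := hρΨ
        simp only [hΨ] at h'
        exact h'
      obtain ⟨w, hdw, hwne, hw0, hkill⟩ := split_pair ρ 0 i1 (Ne.symm hi10)
        (wv g0 0) (wv g0 1) (hwv0 g0 0) (hwv1 g0 0) (hwv0 g0 1) (hwv1 g0 1) hnboth hρΨ'
      exact ⟨w, hdw, hwne, hw0, hkill⟩
  intro A
  apply kills_all ρ _ A
  intro i k hik hvk
  apply stepB ρ _ hik hvk
  intro j hj hvj
  exact stepA ρ hwne hw0 hdot hkill hj hvj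
end

section
/- Let K be a field with char(K) ≠ 2, let d ≥ 1, and let φ : ℤ_2^m → SL_d(K) be a group homomorphism. Then the image of φ has at most 2^{d−1} elements. -/
open Module

/-- If an endomorphism squares to one and `2 ≠ 0`, then any nonzero generalized
eigenvector is a genuine eigenvector with eigenvalue `±1`. -/
lemma eigen_of_sq_one {K M : Type*} [Field K] [AddCommGroup M] [Module K M]
    (f : Module.End K M) (hf : f * f = 1) (h2 : (2 : K) ≠ 0)
    {μ : K} {v : M} (hv : v ≠ 0)
    (h : ∃ k : ℕ, ((f - μ • (1 : Module.End K M)) ^ k) v = 0) :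
    (μ = 1 ∨ μ = -1) ∧ f v = μ • v := by
  classical
  set g : Module.End K M := f - μ • 1 with hgdef
  obtain ⟨k, hk⟩ := h
  have hgg : g * g = (1 - μ * μ) • (1 : Module.End K M) - (2 * μ) • g := by
    have expand : g * g = 1 - (2 * μ) • f + (μ * μ) • (1 : Module.End K M) := by
      rw [hgdef, sub_mul, mul_sub, mul_sub, hf, smul_mul_assoc, mul_smul_comm,
        one_mul, mul_one, smul_mul_assoc, one_mul, smul_smul]
      module
    rw [expand, hgdef]
    module
  have hμsq : μ * μ = 1 := by
    by_contra hμ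
    have hne : (1 : K) - μ * μ ≠ 0 := sub_ne_zero.mpr (Ne.symm hμ)
    set u : Module.End K M := ((1 - μ * μ)⁻¹) • (g + (2 * μ) • 1) with hudef
    have hgu : g * u = 1 := by
      rw [hudef, mul_smul_comm, mul_add, mul_smul_comm, mul_one]
      have : g * g + (2 * μ) • g = (1 - μ * μ) • (1 : Module.End K M) := by
        rw [hgg]; module
      rw [this, smul_smul, inv_mul_cancel₀ hne, one_smul]
    have hug : u * g = 1 := by
      rw [hudef, smul_mul_assoc, add_mul, smul_mul_assoc, one_mul]
      have : g * g + (2 * μ) • g = (1 - μ * μ) • (1 : Module.End K M) := by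
        rw [hgg]; module
      rw [this, smul_smul, inv_mul_cancel₀ hne, one_smul]
    have hcomm : Commute u g := by
      unfold Commute SemiconjBy
      rw [hug, hgu]
    have : v = 0 := by
      have h1 : (u ^ k * g ^ k) = 1 := by
        rw [← hcomm.mul_pow, hug, one_pow]
      calc v = (u ^ k * g ^ k) v := by rw [h1]; rfl
        _ = (u ^ k) ((g ^ k) v) := rfl
        _ = 0 := by rw [hk, map_zero]
    exact hv this
  have hμ : μ = 1 ∨ μ = -1 := mul_self_eq_one_iff.mp hμsq
  have hμ0 : (2 : K) * μ ≠ 0 := by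
    have : μ ≠ 0 := by rintro rfl; simp at hμsq
    exact mul_ne_zero h2 this
  have hgg' : g * g = (-(2 * μ)) • g := by
    rw [hgg, hμsq, sub_self, zero_smul, zero_sub, neg_smul]
  -- descend: g^(k+1) v = 0 → g v = 0
  have step : ∀ n : ℕ, (g ^ (n + 1)) v = 0 → g v = 0 := by
    intro n
    induction n with
    | zero => intro h; rwa [pow_one] at h
    | succ n ih =>
        intro h
        have : (g ^ (n + 2)) = (-(2 * μ)) • g ^ (n + 1) := by
          have : g ^ (n + 2) = g ^ n * (g * g) := by
            rw [← pow_two, ← pow_add]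
          rw [this, hgg', mul_smul_comm, ← pow_succ]
        rw [this] at h
        have h' : (g ^ (n + 1)) v = 0 := by
          have := h
          rw [LinearMap.smul_apply] at this
          exact (smul_eq_zero.mp this).resolve_left (by simpa using hμ0)
        exact ih h'
  have hgv : g v = 0 := by
    cases k with
    | zero => exact absurd (by simpa using hk) hv
    | succ n => exact step n hk
  refine ⟨hμ, ?_⟩
  have : f v - μ • v = 0 := by
    have := hgv
    rw [hgdef] at this
    simpa using this
  linear_combination (norm := module) this

/-- An endomorphism squaring to one is (generalized-)diagonalizable when `2 ≠ 0`. -/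
lemma sup_maxGenEigenspace_of_sq_one {K M : Type*} [Field K] [AddCommGroup M] [Module K M]
    (f : Module.End K M) (hf : f * f = 1) (h2 : (2 : K) ≠ 0) :
    ⨆ μ : K, f.maxGenEigenspace μ = ⊤ := by
  rw [eq_top_iff]
  intro v _
  have hff : ∀ w, f (f w) = w := by
    intro w
    have := LinearMap.ext_iff.mp hf w
    simpa using this
  set w₁ : M := (2 : K)⁻¹ • (v + f v) with hw₁
  set w₂ : M := (2 : K)⁻¹ • (v - f v) with hw₂
  have h1 : w₁ ∈ f.maxGenEigenspace 1 := by
    rw [Module.End.mem_maxGenEigenspace]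
    refine ⟨1, ?_⟩
    rw [pow_one, LinearMap.sub_apply, LinearMap.smul_apply, Module.End.one_apply,
      one_smul, hw₁, map_smul, map_add, hff, add_comm (f v) v, sub_self]
  have hneg1 : w₂ ∈ f.maxGenEigenspace (-1) := by
    rw [Module.End.mem_maxGenEigenspace]
    refine ⟨1, ?_⟩
    rw [pow_one, LinearMap.sub_apply, LinearMap.smul_apply, Module.End.one_apply,
      neg_smul, one_smul, sub_neg_eq_add, hw₂, map_smul, map_sub, hff, ← smul_add]
    have : f v - v + (v - f v) = 0 := by abel
    rw [this, smul_zero]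
  have hv : v = w₁ + w₂ := by
    rw [hw₁, hw₂, ← smul_add]
    have : v + f v + (v - f v) = (2 : K) • v := by
      rw [two_smul]; abel
    rw [this, smul_smul, inv_mul_cancel₀ h2, one_smul]
  rw [hv]
  exact Submodule.add_mem _
    (le_iSup (fun μ : K => f.maxGenEigenspace μ) 1 h1)
    (le_iSup (fun μ : K => f.maxGenEigenspace μ) (-1) hneg1)

set_option synthInstance.maxHeartbeats 1000000 in
/-- If `char K ≠ 2` and `d ≥ 1`, the image of any homomorphism
`φ : ℤ₂^m → SL_d(K)` has at most `2^(d-1)` elements. -/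
theorem image_card_le_of_elementary_abelian_two {m d : ℕ} {K : Type*}
    [Field K] (hK : ringChar K ≠ 2) (hd : 1 ≤ d)
    (φ : Multiplicative (Fin m → ZMod 2) →*
      Matrix.SpecialLinearGroup (Fin d) K) :
    (Set.range φ).Finite ∧ Nat.card (Set.range φ) ≤ 2 ^ (d - 1) := by
  classical
  have h2 : (2 : K) ≠ 0 := Ring.two_ne_zero hK
  set G := Multiplicative (Fin m → ZMod 2)
  set f : G → Module.End K (Fin d → K) :=
    fun x => Matrix.toLin' ((φ x : Matrix (Fin d) (Fin d) K)) with hfdef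
  have hmul : ∀ x y : G, f x * f y = f (x * y) := by
    intro x y
    simp only [hfdef]
    rw [map_mul, Matrix.SpecialLinearGroup.coe_mul, Matrix.toLin'_mul]
    rfl
  have hxx : ∀ x : G, x * x = 1 := by
    intro x
    have : Multiplicative.toAdd x + Multiplicative.toAdd x = 0 := by
      funext i
      exact CharTwo.add_self_eq_zero _
    have h := congrArg Multiplicative.ofAdd this
    simpa using h
  have hsq : ∀ x : G, f x * f x = 1 := by
    intro x
    rw [hmul, hxx, hfdef]
    simp only [map_one, Matrix.SpecialLinearGroup.coe_one]
    rw [Matrix.toLin'_one]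
    rfl
  have hcomm : ∀ x y : G, Commute (f x) (f y) := by
    intro x y
    unfold Commute SemiconjBy
    rw [hmul, hmul, mul_comm]
  have hsup : ∀ x : G, ⨆ μ : K, (f x).maxGenEigenspace μ = ⊤ :=
    fun x => sup_maxGenEigenspace_of_sq_one (f x) (hsq x) h2
  have hiSup : ⨆ χ : G → K, ⨅ x, (f x).maxGenEigenspace (χ x) = ⊤ :=
    Module.End.iSup_iInf_maxGenEigenspace_eq_top_of_iSup_maxGenEigenspace_eq_top_of_commute
      f (fun x y _ => hcomm x y) hsup
  have hindep : iSupIndep (fun χ : G → K => ⨅ x, (f x).maxGenEigenspace (χ x)) :=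
    Module.End.independent_iInf_maxGenEigenspace_of_forall_mapsTo f
      (fun i j μ => Module.End.mapsTo_maxGenEigenspace_of_comm (hcomm j i) μ)
  have hint : DirectSum.IsInternal (fun χ : G → K => ⨅ x, (f x).maxGenEigenspace (χ x)) :=
    DirectSum.isInternal_submodule_of_iSupIndep_of_iSup_eq_top hindep hiSup
  set W : (G → K) → Submodule K (Fin d → K) :=
    fun χ => ⨅ x, (f x).maxGenEigenspace (χ x) with hWdef
  let bW : ∀ χ : G → K, Basis (Module.Basis.ofVectorSpaceIndex K (W χ)) K (W χ) :=
    fun χ => Basis.ofVectorSpace K (W χ)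
  set ι := Σ χ : G → K, Module.Basis.ofVectorSpaceIndex K (W χ) with hιdef
  let b : Basis ι K (Fin d → K) := hint.collectedBasis bW
  haveI : Fintype ι := FiniteDimensional.fintypeBasisIndex b
  have hcard : Fintype.card ι = d := by
    rw [← Module.finrank_eq_card_basis b, Module.finrank_fin_fun]
  -- eigen property of basis vectors
  have heig : ∀ (σ : ι) (x : G),
      (σ.1 x = 1 ∨ σ.1 x = -1) ∧ f x (b σ) = σ.1 x • b σ := by
    intro σ x
    have hmem : b σ ∈ W σ.1 := hint.collectedBasis_mem bW σ
    have hmem' : b σ ∈ (f x).maxGenEigenspace (σ.1 x) :=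
      (iInf_le (fun y => (f y).maxGenEigenspace (σ.1 y)) x) hmem
    exact eigen_of_sq_one (f x) (hsq x) h2 (b.ne_zero σ)
      ((Module.End.mem_maxGenEigenspace _ _ _).mp hmem')
  -- determinant gives product condition
  have hdet : ∀ x : G, ∏ σ : ι, σ.1 x = 1 := by
    intro x
    have hmat : LinearMap.toMatrix b b (f x) = Matrix.diagonal (fun σ : ι => σ.1 x) := by
      ext i j
      rw [LinearMap.toMatrix_apply, (heig j x).2, map_smul, b.repr_self]
      by_cases h : i = j
      · subst h; simp
      · simp [Matrix.diagonal, Ne.symm h, Finsupp.single_apply, h]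
    have hdet1 : LinearMap.det (f x) = ∏ σ : ι, σ.1 x := by
      rw [← LinearMap.det_toMatrix b, hmat, Matrix.det_diagonal]
    have hdet2 : LinearMap.det (f x) = 1 := by
      rw [hfdef]
      simp only [LinearMap.det_toLin']
      exact (φ x).2
    rw [← hdet1, hdet2]
  -- pick a distinguished index
  have hne : Nonempty ι := by
    rw [← Fintype.card_pos_iff, hcard]; omega
  obtain ⟨σ₀⟩ := hne
  -- values off σ₀ determine everything
  have hval : ∀ x y : G, (∀ σ : ι, σ ≠ σ₀ → σ.1 x = σ.1 y) → φ x = φ y := by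
    intro x y hxy
    have hall : ∀ σ : ι, σ.1 x = σ.1 y := by
      intro σ
      by_cases hσ : σ = σ₀
      · subst hσ
        have hx := hdet x
        have hy := hdet y
        rw [Fintype.prod_eq_mul_prod_compl σ] at hx hy
        have hprod : (∏ i ∈ ({σ}ᶜ : Finset ι), i.1 x) = ∏ i ∈ ({σ}ᶜ : Finset ι), i.1 y :=
          Finset.prod_congr rfl fun i hi => hxy i (by simpa using hi)
        have hx' : σ.1 x = (∏ i ∈ ({σ}ᶜ : Finset ι), i.1 x)⁻¹ :=
          eq_inv_of_mul_eq_one_left hx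
        have hy' : σ.1 y = (∏ i ∈ ({σ}ᶜ : Finset ι), i.1 y)⁻¹ :=
          eq_inv_of_mul_eq_one_left hy
        rw [hx', hy', hprod]
      · exact hxy σ hσ
    have hfeq : f x = f y := by
      apply b.ext
      intro σ
      rw [(heig σ x).2, (heig σ y).2, hall σ]
    have := Matrix.toLin'.injective (by exact hfeq)
    exact Subtype.ext this
  -- the boolean encoding
  set E : Matrix.SpecialLinearGroup (Fin d) K → ({σ : ι // σ ≠ σ₀} → Bool) :=
    fun g σ => decide (Matrix.toLin' (g : Matrix (Fin d) (Fin d) K) (b σ.1) = b σ.1) with hEdef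
  have hE : ∀ (x : G) (σ : {σ : ι // σ ≠ σ₀}), E (φ x) σ = decide (σ.1.1 x = 1) := by
    intro x σ
    rw [hEdef]
    simp only
    rw [show Matrix.toLin' ((φ x : Matrix (Fin d) (Fin d) K)) (b σ.1) = f x (b σ.1) from rfl,
      (heig σ.1 x).2, decide_eq_decide]
    constructor
    · intro h
      rcases (heig σ.1 x).1 with h1 | h1
      · exact h1
      · exfalso
        rw [h1] at h
        have : ((-1 : K) - 1) • b σ.1 = 0 := by
          rw [sub_smul, h, one_smul, sub_self]
        rcases smul_eq_zero.mp this with h' | h'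
        · apply h2
          have : (-1 : K) - 1 = -(2 : K) := by ring
          rw [this] at h'
          simpa using h'
        · exact b.ne_zero σ.1 h'
    · intro h; rw [h, one_smul]
  have hEinj : Set.InjOn E (Set.range φ) := by
    rintro g1 ⟨x, rfl⟩ g2 ⟨y, rfl⟩ hEeq
    apply hval x y
    intro σ hσ
    have := congrFun hEeq ⟨σ, hσ⟩
    rw [hE x ⟨σ, hσ⟩, hE y ⟨σ, hσ⟩] at this
    have hone : (-1 : K) ≠ 1 := fun h => h2 (by linear_combination (-1 : K) * h)
    rcases (heig σ x).1 with hx1 | hx1 <;> rcases (heig σ y).1 with hy1 | hy1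
    · rw [hx1, hy1]
    · exfalso
      rw [decide_eq_decide] at this
      rw [hx1, hy1] at this
      exact hone (this.mp rfl)
    · exfalso
      rw [decide_eq_decide] at this
      rw [hx1, hy1] at this
      exact hone (this.mpr rfl)
    · rw [hx1, hy1]
  -- conclude
  have hfin : (Set.range φ).Finite := Set.Finite.of_finite_image (Set.toFinite _) hEinj
  refine ⟨hfin, ?_⟩
  haveI : Finite (Set.range φ) := hfin
  haveI : Finite ι := Finite.of_fintype ι
  haveI : Finite {σ : ι // σ ≠ σ₀} := Subtype.finite
  haveI : Finite ({σ : ι // σ ≠ σ₀} → Bool) := Pi.finite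
  have hle : Nat.card (Set.range φ) ≤ Nat.card ({σ : ι // σ ≠ σ₀} → Bool) :=
    Nat.card_le_card_of_injective ((Set.range φ).restrict E) hEinj.injective
  have hcard2 : Nat.card ({σ : ι // σ ≠ σ₀} → Bool) = 2 ^ (d - 1) := by
    rw [Nat.card_eq_fintype_card, Fintype.card_fun, Fintype.card_bool]
    congr 1
    rw [Fintype.card_subtype_compl, Fintype.card_subtype_eq, hcard]
  rw [← hcard2]
  exact hle
end

section
/- The group PSL_4(ℤ) contains a subgroup isomorphic to ℤ_2^4; namely, the subgroup generated by the images [E_{−1}E_{−2}], [E_{−2}E_{−3}], [P_{12}P_{34}], [P_{13}P_{24}] of the indicated matrices of SL_4(ℤ) is isomorphic to the direct product of 4 copies of the cyclic group of order 2. -/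
open Matrix

/-- `E₋₁E₋₂ = diag(-1,-1,1,1)` as an element of `SL₄(ℤ)`. -/
def Eneg12 : Matrix.SpecialLinearGroup (Fin 4) ℤ :=
  ⟨Matrix.diagonal ![-1, -1, 1, 1], by
    simp [Matrix.det_diagonal, Fin.prod_univ_four]⟩

/-- `E₋₂E₋₃ = diag(1,-1,-1,1)` as an element of `SL₄(ℤ)`. -/
def Eneg23 : Matrix.SpecialLinearGroup (Fin 4) ℤ :=
  ⟨Matrix.diagonal ![1, -1, -1, 1], by
    simp [Matrix.det_diagonal, Fin.prod_univ_four]⟩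

/-- `P₁₂P₃₄`: the permutation matrix of `(1 2)(3 4)` as an element of
`SL₄(ℤ)`. -/
def P12P34 : Matrix.SpecialLinearGroup (Fin 4) ℤ :=
  ⟨Equiv.Perm.permMatrix ℤ (Equiv.swap (0 : Fin 4) 1 * Equiv.swap 2 3), by
    rw [Matrix.det_permutation]
    decide⟩

/-- `P₁₃P₂₄`: the permutation matrix of `(1 3)(2 4)` as an element of
`SL₄(ℤ)`. -/
def P13P24 : Matrix.SpecialLinearGroup (Fin 4) ℤ :=
  ⟨Equiv.Perm.permMatrix ℤ (Equiv.swap (0 : Fin 4) 2 * Equiv.swap 1 3), by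
    rw [Matrix.det_permutation]
    decide⟩

instance : DecidableEq (Matrix.SpecialLinearGroup (Fin 4) ℤ) :=
  fun a b => decidable_of_iff (a.val = b.val) Subtype.ext_iff.symm

/-- The negative of the identity in `SL₄(ℤ)`. -/
def cneg : Matrix.SpecialLinearGroup (Fin 4) ℤ := ⟨-1, by decide⟩

lemma cneg_mem_center : cneg ∈ Subgroup.center (Matrix.SpecialLinearGroup (Fin 4) ℤ) := by
  rw [Matrix.SpecialLinearGroup.mem_center_iff]
  exact ⟨-1, by norm_num, by ext i j : 2; simp [cneg]⟩

lemma center_char (A : Matrix.SpecialLinearGroup (Fin 4) ℤ)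
    (hA : A ∈ Subgroup.center (Matrix.SpecialLinearGroup (Fin 4) ℤ)) : A = 1 ∨ A = cneg := by
  rw [Matrix.SpecialLinearGroup.mem_center_iff] at hA
  obtain ⟨r, hr4, hr⟩ := hA
  have hu : IsUnit r := IsUnit.of_pow_eq_one hr4 (by norm_num)
  rcases Int.isUnit_iff.mp hu with h | h <;> subst h
  · left; ext i j : 2; simp [← hr]
  · right; ext i j : 2; simp [← hr, cneg, Matrix.one_apply]

/-- The lift of a vector in `(ℤ/2)⁴` to `SL₄(ℤ)`. -/
def m (v : Fin 4 → ZMod 2) : Matrix.SpecialLinearGroup (Fin 4) ℤ :=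
  Eneg12 ^ (v 0).val * Eneg23 ^ (v 1).val * P12P34 ^ (v 2).val * P13P24 ^ (v 3).val

set_option maxHeartbeats 4000000 in
lemma key1 : ∀ v w : Fin 4 → ZMod 2,
    m (v + w) = m v * m w ∨ m (v + w) = cneg * (m v * m w) := by decide

lemma key2 : ∀ v : Fin 4 → ZMod 2, m v = 1 ∨ m v = cneg → v = 0 := by decide

noncomputable abbrev mkc :=
  QuotientGroup.mk' (Subgroup.center (Matrix.SpecialLinearGroup (Fin 4) ℤ))

lemma mkc_cneg : mkc cneg = 1 := by
  exact (QuotientGroup.eq_one_iff _).mpr cneg_mem_center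

/-- The homomorphism from `(ℤ/2)⁴` to `PSL₄(ℤ)`. -/
noncomputable def f : Multiplicative (Fin 4 → ZMod 2) →*
    (Matrix.SpecialLinearGroup (Fin 4) ℤ ⧸ Subgroup.center (Matrix.SpecialLinearGroup (Fin 4) ℤ)) where
  toFun v := mkc (m v.toAdd)
  map_one' := by
    have : m 0 = 1 := by decide
    simp [this]
  map_mul' v w := by
    rcases key1 v.toAdd w.toAdd with h | h
    · simp only [toAdd_mul, h, _root_.map_mul]
    · simp only [toAdd_mul, h, _root_.map_mul, mkc_cneg, one_mul]

lemma f_inj : Function.Injective f := by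
  rw [injective_iff_map_eq_one]
  intro v hv
  have : m v.toAdd ∈ Subgroup.center (Matrix.SpecialLinearGroup (Fin 4) ℤ) := by
    rw [show f v = mkc (m v.toAdd) from rfl] at hv
    exact (QuotientGroup.eq_one_iff _).mp hv
  have h0 : v.toAdd = 0 := key2 _ (center_char _ this)
  exact Multiplicative.toAdd.injective (by simpa using h0)

lemma f_range : f.range = Subgroup.closure
    {mkc Eneg12, mkc Eneg23, mkc P12P34, mkc P13P24} := by
  apply le_antisymm
  · rintro _ ⟨v, rfl⟩
    have : f v = (mkc Eneg12) ^ (v.toAdd 0).val * (mkc Eneg23) ^ (v.toAdd 1).val *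
        (mkc P12P34) ^ (v.toAdd 2).val * (mkc P13P24) ^ (v.toAdd 3).val := by
      show mkc (m v.toAdd) = _
      simp [m, _root_.map_mul, map_pow]
    rw [this]
    have h1 := Subgroup.subset_closure (k :=
      {mkc Eneg12, mkc Eneg23, mkc P12P34, mkc P13P24})
    exact mul_mem (mul_mem (mul_mem (pow_mem (h1 (by simp)) _) (pow_mem (h1 (by simp)) _))
      (pow_mem (h1 (by simp)) _)) (pow_mem (h1 (by simp)) _)
  · rw [Subgroup.closure_le]
    rintro x hx
    simp only [Set.mem_insert_iff, Set.mem_singleton_iff] at hx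
    rcases hx with rfl | rfl | rfl | rfl
    · exact ⟨Multiplicative.ofAdd (Pi.single 0 1), congrArg mkc (by decide)⟩
    · exact ⟨Multiplicative.ofAdd (Pi.single 1 1), congrArg mkc (by decide)⟩
    · exact ⟨Multiplicative.ofAdd (Pi.single 2 1), congrArg mkc (by decide)⟩
    · exact ⟨Multiplicative.ofAdd (Pi.single 3 1), congrArg mkc (by decide)⟩

/-- The subgroup of `PSL₄(ℤ) = SL₄(ℤ)/{±I}` generated by the classes
`[E₋₁E₋₂], [E₋₂E₋₃], [P₁₂P₃₄], [P₁₃P₂₄]` is isomorphic to `ℤ₂⁴`; in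
particular `PSL₄(ℤ)` contains a subgroup isomorphic to `ℤ₂⁴`. -/
theorem PSL4_elementary_subgroup :
    Nonempty ((Subgroup.closure
        {QuotientGroup.mk' (Subgroup.center (Matrix.SpecialLinearGroup (Fin 4) ℤ)) Eneg12,
         QuotientGroup.mk' (Subgroup.center (Matrix.SpecialLinearGroup (Fin 4) ℤ)) Eneg23,
         QuotientGroup.mk' (Subgroup.center (Matrix.SpecialLinearGroup (Fin 4) ℤ)) P12P34,
         QuotientGroup.mk' (Subgroup.center (Matrix.SpecialLinearGroup (Fin 4) ℤ)) P13P24}) ≃*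
      Multiplicative (Fin 4 → ZMod 2)) := by
  exact ⟨((MulEquiv.subgroupCongr f_range.symm).trans
    (MonoidHom.ofInjective f_inj).symm : _)⟩
end
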